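/- Let 0 < α < 1/2 and ε > 0 be such that ε/(1−2α) ≤ 1/2, and let l be such that (1−2α)/(2(2α)^{l+1}) − 1 − ε > 0. Then for every A > 0 there exists K_0 such that for all K ≥ K_0 and all (b_0,…,b_K) ∈ [1,∞)^{K+1}: ∑_{i=0}^{K}(1/2 + b_i/(K+2)^{1+ε})/((b_{i-1}+b_i)^α (b_i+b_{i+1})^α) > A (with b_{-1} = b_{K+1} = 0). -/

import Mathlib

/-!
Put `p = 1 - 2α`, `aᵢ = 1/2 + bᵢ/M` with `M = (K+2)^(1+ε)`, and `sᵢ = bᵢ₋₁ + bᵢ + bᵢ₊₁`.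
The `i`-th term is at least `aᵢ / sᵢ^(1-p)`, and Hölder's inequality gives
`∑ aᵢ^p ≤ (∑ aᵢ / sᵢ^(1-p))^p (∑ sᵢ^p)^(1-p)`. Subadditivity of `x ↦ x^p` bounds
`∑ sᵢ^p ≤ 3 ∑ bᵢ^p ≤ 3 M^p ∑ aᵢ^p`, so `∑ aᵢ^p` can be absorbed on the left, and since
`∑ aᵢ^p ≥ 2^(-p) (K+1)` the sum is at least a constant times `(K+1) / M^(2α)`.
The condition `ε/(1-2α) ≤ 1/2` makes `(1+ε)·2α < 1`, so this lower bound tends to infinity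
uniformly in `b`.
-/

open Filter Finset Real

theorem sum_rpow_le_sum_div_rpow_one_sub_mul_sum_rpow {ι : Type*} (s : Finset ι) {p : ℝ}
    (hp0 : 0 < p) (hp1 : p ≤ 1) {a w : ι → ℝ} (ha : ∀ i, 0 ≤ a i) (hw : ∀ i, 0 ≤ w i)
    (hw₀ : ∀ i ∈ s, w i ≠ 0) :
    ∑ i ∈ s, a i ^ p ≤ (∑ i ∈ s, a i / w i ^ (1 - p)) ^ p * (∑ i ∈ s, w i ^ p) ^ (1 - p) := by
  have holder := inner_le_weight_mul_Lp_of_nonneg s (one_le_inv₀ hp0 |>.mpr hp1)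
    (fun i => w i ^ p) (fun i => (a i / w i) ^ p) (fun i => rpow_nonneg (hw i) p)
    (fun i => rpow_nonneg (div_nonneg (ha i) (hw i)) p)
  simp only [inv_inv, rpow_rpow_inv (div_nonneg (ha _) (hw _)) hp0.ne'] at holder
  have hleft : ∑ i ∈ s, w i ^ p * (a i / w i) ^ p = ∑ i ∈ s, a i ^ p :=
    sum_congr rfl fun i hi => by
      rw [← mul_rpow (hw i) (div_nonneg (ha i) (hw i)), mul_div_cancel₀ _ (hw₀ i hi)]
  have hright : ∑ i ∈ s, w i ^ p * (a i / w i) = ∑ i ∈ s, a i / w i ^ (1 - p) :=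
    sum_congr rfl fun i hi => by
      have hwi : 0 < w i := (hw i).lt_of_ne' (hw₀ i hi)
      rw [rpow_sub hwi, rpow_one]
      field_simp
  rw [hleft, hright] at holder
  linarith

theorem le_rpow_mul_of_le_rpow_mul_mul_rpow {x y z p : ℝ} (hx : 0 ≤ x) (hy : 0 ≤ y)
    (hz : 0 ≤ z) (hp : 0 < p) (h : x ≤ z ^ p * (y * x) ^ (1 - p)) :
    x ≤ y ^ ((1 - p) / p) * z := by
  obtain rfl | hx := hx.eq_or_lt
  · positivity
  have hsplit : x = x ^ p * x ^ (1 - p) := by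
    rw [← rpow_add hx, add_sub_cancel, rpow_one]
  have hpow : x ^ p ≤ (y ^ ((1 - p) / p) * z) ^ p := by
    rw [mul_rpow (rpow_nonneg hy _) hz, ← rpow_mul hy, div_mul_cancel₀ _ hp.ne']
    refine le_of_mul_le_mul_right ?_ (rpow_pos_of_pos hx (1 - p))
    rw [← hsplit]
    calc x ≤ z ^ p * (y * x) ^ (1 - p) := h
      _ = y ^ (1 - p) * z ^ p * x ^ (1 - p) := by rw [mul_rpow hy hx.le]; ring
  exact (rpow_le_rpow_iff hx.le (by positivity) hp).mp hpow

theorem Finset.sum_comp_add_le {G : Type*} [AddGroup G] {s : Finset G} {g : G → ℝ}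
    (hg : ∀ i, 0 ≤ g i) (hs : ∀ i ∉ s, g i = 0) (c : G) :
    ∑ i ∈ s, g (i + c) ≤ ∑ i ∈ s, g i := by
  classical
  calc ∑ i ∈ s, g (i + c) = ∑ j ∈ s.map (addRightEmbedding c), g j := by
        rw [sum_map]; rfl
    _ = ∑ j ∈ s.map (addRightEmbedding c) ∩ s, g j :=
        (sum_subset inter_subset_left fun j hj hj' =>
          hs j fun hjs => hj' (mem_inter.2 ⟨hj, hjs⟩)).symm
    _ ≤ ∑ j ∈ s, g j := sum_le_sum_of_subset_of_nonneg inter_subset_right fun j _ _ => hg j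

theorem sum_rpow_add_add_le_three_mul {s : Finset ℤ} {b : ℤ → ℝ} (hb : ∀ i, 0 ≤ b i)
    (hs : ∀ i ∉ s, b i = 0) {p : ℝ} (hp0 : 0 < p) (hp1 : p ≤ 1) :
    ∑ i ∈ s, (b (i - 1) + b i + b (i + 1)) ^ p ≤ 3 * ∑ i ∈ s, b i ^ p := by
  have hshift (c : ℤ) : ∑ i ∈ s, b (i + c) ^ p ≤ ∑ i ∈ s, b i ^ p :=
    sum_comp_add_le (g := fun i => b i ^ p) (fun i => rpow_nonneg (hb i) p)
      (fun i hi => by simp [hs i hi, zero_rpow hp0.ne']) c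
  have hsub (i : ℤ) : (b (i - 1) + b i + b (i + 1)) ^ p ≤
      b (i + -1) ^ p + b i ^ p + b (i + 1) ^ p := by
    rw [← sub_eq_add_neg]
    calc (b (i - 1) + b i + b (i + 1)) ^ p ≤ (b (i - 1) + b i) ^ p + b (i + 1) ^ p :=
          rpow_add_le_add_rpow (add_nonneg (hb _) (hb _)) (hb _) hp0.le hp1
      _ ≤ b (i - 1) ^ p + b i ^ p + b (i + 1) ^ p := by
          gcongr; exact rpow_add_le_add_rpow (hb _) (hb _) hp0.le hp1
  calc ∑ i ∈ s, (b (i - 1) + b i + b (i + 1)) ^ p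
      ≤ ∑ i ∈ s, (b (i + -1) ^ p + b i ^ p + b (i + 1) ^ p) := sum_le_sum fun i _ => hsub i
    _ ≤ 3 * ∑ i ∈ s, b i ^ p := by
        rw [sum_add_distrib, sum_add_distrib]
        linarith [hshift (-1), hshift 1]

theorem sum_rpow_add_add_le_three_mul_rpow_mul_sum {s : Finset ℤ} {b : ℤ → ℝ}
    (hb : ∀ i, 0 ≤ b i) (hs : ∀ i ∉ s, b i = 0) {p M c : ℝ} (hp0 : 0 < p) (hp1 : p ≤ 1)
    (hM : 0 < M) (hc : 0 ≤ c) :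
    ∑ i ∈ s, (b (i - 1) + b i + b (i + 1)) ^ p ≤ 3 * M ^ p * ∑ i ∈ s, (c + b i / M) ^ p := by
  have hbM (i : ℤ) : b i ^ p ≤ M ^ p * (c + b i / M) ^ p := by
    rw [← mul_rpow hM.le (by have := hb i; positivity)]
    refine rpow_le_rpow (hb i) ?_ hp0.le
    rw [mul_add, mul_div_cancel₀ _ hM.ne']
    nlinarith
  calc ∑ i ∈ s, (b (i - 1) + b i + b (i + 1)) ^ p ≤ 3 * ∑ i ∈ s, b i ^ p :=
        sum_rpow_add_add_le_three_mul hb hs hp0 hp1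
    _ ≤ 3 * ∑ i ∈ s, M ^ p * (c + b i / M) ^ p := by gcongr with i; exact hbM i
    _ = 3 * M ^ p * ∑ i ∈ s, (c + b i / M) ^ p := by rw [← mul_sum, mul_assoc]

theorem rpow_mul_rpow_le_rpow_add_add {x y z α : ℝ} (hx : 0 ≤ x) (hy : 0 ≤ y) (hz : 0 ≤ z)
    (hα : 0 ≤ α) : (x + y) ^ α * (y + z) ^ α ≤ (x + y + z) ^ (2 * α) := by
  rw [← mul_rpow (by positivity) (by positivity), rpow_mul (by positivity), rpow_two]
  exact rpow_le_rpow (by positivity) (by nlinarith) hα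

theorem card_le_mul_rpow_mul_sum (s : Finset ℤ) {b : ℤ → ℝ} (hb1 : ∀ i ∈ s, 1 ≤ b i)
    (hb0 : ∀ i ∉ s, b i = 0) {α M : ℝ} (hα0 : 0 ≤ α) (hα : α < 1 / 2) (hM : 0 < M) :
    (#s : ℝ) ≤ 2 ^ (1 - 2 * α) * 3 ^ (2 * α / (1 - 2 * α)) * M ^ (2 * α) *
      ∑ i ∈ s, (1 / 2 + b i / M) / ((b (i - 1) + b i) ^ α * (b i + b (i + 1)) ^ α) := by
  have hb (i : ℤ) : 0 ≤ b i := by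
    by_cases hi : i ∈ s
    · linarith [hb1 i hi]
    · rw [hb0 i hi]
  set p := 1 - 2 * α
  have hp0 : 0 < p := by linarith
  have hp1 : p ≤ 1 := by linarith
  have h1p : 1 - p = 2 * α := by ring
  set a : ℤ → ℝ := fun i => 1 / 2 + b i / M
  set w : ℤ → ℝ := fun i => b (i - 1) + b i + b (i + 1) with hw_def
  have ha (i : ℤ) : 0 ≤ a i := by have := hb i; positivity
  have hw (i : ℤ) : 0 ≤ w i := by have := hb (i - 1); have := hb i; have := hb (i + 1); positivity
  have hw₀ (i : ℤ) (hi : i ∈ s) : w i ≠ 0 := by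
    have := hb (i - 1); have := hb1 i hi; have := hb (i + 1)
    exact (show 0 < w i by simp only [hw_def]; linarith).ne'
  set X := ∑ i ∈ s, a i ^ p
  set Z := ∑ i ∈ s, a i / w i ^ (1 - p)
  have hX : (#s : ℝ) * (1 / 2) ^ p ≤ X := by
    rw [← nsmul_eq_mul, ← sum_const]
    exact sum_le_sum fun i _ => rpow_le_rpow (by norm_num)
      (le_add_of_nonneg_right (div_nonneg (hb i) hM.le)) hp0.le
  have hZ : Z ≤ ∑ i ∈ s, (1 / 2 + b i / M) / ((b (i - 1) + b i) ^ α * (b i + b (i + 1)) ^ α) := by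
    refine sum_le_sum fun i hi => div_le_div_of_nonneg_left (ha i) ?_ ?_
    · have := hb (i - 1); have := hb1 i hi; have := hb (i + 1)
      positivity
    · rw [h1p]
      exact rpow_mul_rpow_le_rpow_add_add (hb _) (hb _) (hb _) hα0
  have hW : ∑ i ∈ s, w i ^ p ≤ 3 * M ^ p * X :=
    sum_rpow_add_add_le_three_mul_rpow_mul_sum hb hb0 hp0 hp1 hM (by norm_num)
  have hZ0 : 0 ≤ Z := sum_nonneg fun i _ => div_nonneg (ha i) (rpow_nonneg (hw i) _)
  have hXZ : X ≤ (3 * M ^ p) ^ ((1 - p) / p) * Z := by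
    refine le_rpow_mul_of_le_rpow_mul_mul_rpow (sum_nonneg fun i _ => rpow_nonneg (ha i) p)
      (by positivity) hZ0 hp0 ?_
    calc X ≤ Z ^ p * (∑ i ∈ s, w i ^ p) ^ (1 - p) :=
          sum_rpow_le_sum_div_rpow_one_sub_mul_sum_rpow s hp0 hp1 ha hw hw₀
      _ ≤ Z ^ p * (3 * M ^ p * X) ^ (1 - p) :=
          mul_le_mul_of_nonneg_left (rpow_le_rpow (sum_nonneg fun i _ => rpow_nonneg (hw i) _)
            hW (by linarith)) (rpow_nonneg hZ0 p)
  have hconst : (3 * M ^ p) ^ ((1 - p) / p) = 3 ^ ((1 - p) / p) * M ^ (1 - p) := by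
    rw [mul_rpow (by norm_num) (rpow_nonneg hM.le _), ← rpow_mul hM.le,
      mul_div_cancel₀ _ hp0.ne']
  have h2p : (2 : ℝ) ^ p * (1 / 2) ^ p = 1 := by
    rw [← mul_rpow (by norm_num) (by norm_num)]; norm_num
  rw [← h1p]
  calc (#s : ℝ) = 2 ^ p * ((#s : ℝ) * (1 / 2) ^ p) := by rw [mul_left_comm, h2p, mul_one]
    _ ≤ 2 ^ p * ((3 * M ^ p) ^ ((1 - p) / p) * Z) := by gcongr 2 ^ p * ?_; exact hX.trans hXZ
    _ ≤ _ := by rw [hconst, ← mul_assoc, ← mul_assoc]; gcongr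

theorem rpow_one_sub_le_mul_sum_Icc (K : ℕ) {b : ℤ → ℝ} (hb1 : ∀ i ∈ Icc (0 : ℤ) K, 1 ≤ b i)
    (hb0 : ∀ i ∉ Icc (0 : ℤ) K, b i = 0) {α ε : ℝ} (hα0 : 0 ≤ α) (hα : α < 1 / 2) :
    ((K : ℝ) + 2) ^ (1 - (1 + ε) * (2 * α)) ≤
      2 * (2 ^ (1 - 2 * α) * 3 ^ (2 * α / (1 - 2 * α))) *
        ∑ i ∈ Icc (0 : ℤ) K, (1 / 2 + b i / ((K : ℝ) + 2) ^ ((1 : ℝ) + ε)) /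
          ((b (i - 1) + b i) ^ α * (b i + b (i + 1)) ^ α) := by
  have hx : (0 : ℝ) < K + 2 := by positivity
  have hcard : (#(Icc (0 : ℤ) K) : ℝ) = K + 1 := by
    rw [Int.card_Icc, sub_zero, Int.toNat_natCast_add_one]; push_cast; ring
  have key := card_le_mul_rpow_mul_sum (Icc (0 : ℤ) K) hb1 hb0 hα0 hα (rpow_pos_of_pos hx (1 + ε))
  rw [hcard, ← rpow_mul hx.le] at key
  rw [rpow_sub hx, rpow_one, div_le_iff₀ (rpow_pos_of_pos hx _)]
  linarith

theorem one_add_mul_two_mul_lt_one {α ε : ℝ} (hα0 : 0 < α) (hα : α < 1 / 2)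
    (hεα : ε / (1 - 2 * α) ≤ 1 / 2) : (1 + ε) * (2 * α) < 1 := by
  have hε : ε ≤ 1 / 2 * (1 - 2 * α) := (div_le_iff₀ (by linarith)).mp hεα
  nlinarith [mul_le_mul_of_nonneg_left hε hα0.le]

theorem stmt17_general (α ε : ℝ) (hα0 : 0 < α) (hα : α < 1/2)
    (hεα : ε/(1-2*α) ≤ 1/2) :
    ∀ A : ℝ, 0 < A → ∃ K₀ : ℕ, ∀ K : ℕ, K₀ ≤ K → ∀ b : ℤ → ℝ,
      (∀ i ∈ Finset.Icc (0:ℤ) (K:ℤ), 1 ≤ b i) →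
      (∀ i, i ∉ Finset.Icc (0:ℤ) (K:ℤ) → b i = 0) →
      A < ∑ i ∈ Finset.Icc (0:ℤ) (K:ℤ),
        (1/2 + b i / ((K:ℝ)+2) ^ ((1:ℝ)+ε)) /
          ((b (i-1) + b i) ^ α * (b i + b (i+1)) ^ α) := by
  intro A _
  set C : ℝ := 2 * (2 ^ (1 - 2 * α) * 3 ^ (2 * α / (1 - 2 * α)))
  have hC : 0 < C := by positivity
  have hgrowth : Tendsto (fun K : ℕ => ((K : ℝ) + 2) ^ (1 - (1 + ε) * (2 * α))) atTop atTop :=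
    (tendsto_rpow_atTop (by linarith [one_add_mul_two_mul_lt_one hα0 hα hεα])).comp
      (tendsto_atTop_add_const_right _ 2 tendsto_natCast_atTop_atTop)
  obtain ⟨K₀, hK₀⟩ := eventually_atTop.mp (hgrowth.eventually_gt_atTop (C * A))
  refine ⟨K₀, fun K hK b hb1 hb0 => lt_of_mul_lt_mul_left ?_ hC.le⟩
  exact (hK₀ K hK).trans_le (rpow_one_sub_le_mul_sum_Icc K hb1 hb0 hα0.le hα)

/-- Strengthened (liminf) form of the analytic lemma: let `0 < α < 1/2` and `ε > 0`
with `ε/(1-2α) ≤ 1/2`, and let `l` be such that `(1-2α)/(2(2α)^{l+1}) - 1 - ε > 0`.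
Then for every `A > 0` there exists `K₀` such that for all `K ≥ K₀` and all tuples
`(b_0,…,b_K) ∈ [1,∞)^{K+1}` (with the convention `b_{-1} = b_{K+1} = 0`):
`∑_{i=0}^{K} (1/2 + b_i/(K+2)^{1+ε})/((b_{i-1}+b_i)^α (b_i+b_{i+1})^α) > A`. -/
theorem stmt17 (α ε : ℝ) (hα0 : 0 < α) (hα : α < 1/2) (hε : 0 < ε)
    (hεα : ε/(1-2*α) ≤ 1/2) (l : ℕ)
    (hl : 0 < (1-2*α)/(2*(2*α)^(l+1)) - 1 - ε) :
    ∀ A : ℝ, 0 < A → ∃ K₀ : ℕ, ∀ K : ℕ, K₀ ≤ K → ∀ b : ℤ → ℝ,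
      (∀ i ∈ Finset.Icc (0:ℤ) (K:ℤ), 1 ≤ b i) →
      (∀ i, i ∉ Finset.Icc (0:ℤ) (K:ℤ) → b i = 0) →
      A < ∑ i ∈ Finset.Icc (0:ℤ) (K:ℤ),
        (1/2 + b i / ((K:ℝ)+2) ^ ((1:ℝ)+ε)) /
          ((b (i-1) + b i) ^ α * (b i + b (i+1)) ^ α) :=
  stmt17_general α ε hα0 hα hεα
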